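/- arXiv:2312.15376 — 4 statements merged into one kernel-verified Lean document; each statement's English description precedes it below -/
import Mathlib

section
/- Let L₁, L₂ be lower triangular m×m real matrices with positive diagonal entries. Define γ(a) := ⌊L₁⌋ + a(⌊L₂⌋ − ⌊L₁⌋) + exp(log D(L₁) + a(log D(L₂) − log D(L₁))) for a ∈ [0,1], where ⌊L⌋ is the strictly lower-triangular part, D(L) the diagonal part, and log/exp act entrywise on diagonals. Then γ(a) is lower triangular with positive diagonal for every a ∈ [0,1], γ(0) = L₁, γ(1) = L₂, and d(γ(a), γ(b)) = |b − a| · d(L₁, L₂) for all a, b ∈ [0,1], where d(A,B)² := ‖⌊A⌋ − ⌊B⌋‖_F² + ‖log D(A) − log D(B)‖_F². -/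
/-!
In the chart `L ↦ (⌊L⌋, log D(L))` the metric `dLC` is the Euclidean distance, and `γ` is the
affine segment from the image of `L₁` to that of `L₂`; distances along an affine segment scale
by `|b - a|`. Lower positive matrices are determined by their chart image, which gives the
endpoint values.
-/

/-- `L` is lower triangular with positive diagonal. -/
def LowerPos {m : ℕ} (L : Matrix (Fin m) (Fin m) ℝ) : Prop :=
  (∀ i j, i < j → L i j = 0) ∧ (∀ i, 0 < L i i)

/-- Log-Cholesky metric:
`d(A,B)² = ‖⌊A⌋−⌊B⌋‖_F² + ‖log D(A) − log D(B)‖_F²`. -/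
noncomputable def dLC {m : ℕ} (A B : Matrix (Fin m) (Fin m) ℝ) : ℝ :=
  Real.sqrt (∑ i, ∑ j, (if (j : Fin m) < i then (A i j - B i j) ^ 2 else 0) +
    ∑ i, (Real.log (A i i) - Real.log (B i i)) ^ 2)

/-- The Log-Cholesky geodesic
`γ(a) = ⌊L₁⌋ + a(⌊L₂⌋−⌊L₁⌋) + exp(log D(L₁) + a(log D(L₂) − log D(L₁)))`. -/
noncomputable def cholGeodesic {m : ℕ} (L₁ L₂ : Matrix (Fin m) (Fin m) ℝ) (a : ℝ) :
    Matrix (Fin m) (Fin m) ℝ := fun i j =>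
  if i = j then
    Real.exp (Real.log (L₁ i i) + a * (Real.log (L₂ i i) - Real.log (L₁ i i)))
  else if j < i then L₁ i j + a * (L₂ i j - L₁ i j) else 0

open Real

theorem LowerPos.ext_of_log_diag {m : ℕ} {A B : Matrix (Fin m) (Fin m) ℝ}
    (hA : LowerPos A) (hB : LowerPos B) (hlow : ∀ i j, j < i → A i j = B i j)
    (hdiag : ∀ i, log (A i i) = log (B i i)) : A = B := by
  ext i j
  rcases lt_trichotomy i j with hij | rfl | hji
  · rw [hA.1 i j hij, hB.1 i j hij]
  · exact Real.log_injOn_pos (hA.2 i) (hB.2 i) (hdiag i)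
  · exact hlow i j hji

theorem dLC_eq_abs_mul {m : ℕ} {A B P Q : Matrix (Fin m) (Fin m) ℝ} (c : ℝ)
    (hlow : ∀ i j, j < i → A i j - B i j = c * (P i j - Q i j))
    (hdiag : ∀ i, log (A i i) - log (B i i) = c * (log (P i i) - log (Q i i))) :
    dLC A B = |c| * dLC P Q := by
  unfold dLC
  rw [← Real.sqrt_sq_eq_abs, ← Real.sqrt_mul (sq_nonneg c), mul_add, Finset.mul_sum,
    Finset.mul_sum]
  congr 2
  · refine Finset.sum_congr rfl fun i _ => ?_
    rw [Finset.mul_sum]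
    refine Finset.sum_congr rfl fun j _ => ?_
    split_ifs with hji
    · rw [hlow i j hji]
      ring
    · rw [mul_zero]
  · refine Finset.sum_congr rfl fun i _ => ?_
    rw [hdiag i]
    ring

section cholGeodesic

variable {m : ℕ} (L₁ L₂ : Matrix (Fin m) (Fin m) ℝ) (a : ℝ)

theorem cholGeodesic_of_lt {i j : Fin m} (hji : j < i) :
    cholGeodesic L₁ L₂ a i j = L₁ i j + a * (L₂ i j - L₁ i j) := by
  rw [cholGeodesic, if_neg hji.ne', if_pos hji]

theorem cholGeodesic_of_gt {i j : Fin m} (hij : i < j) : cholGeodesic L₁ L₂ a i j = 0 := by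
  rw [cholGeodesic, if_neg hij.ne, if_neg hij.not_gt]

theorem log_cholGeodesic_diag (i : Fin m) :
    log (cholGeodesic L₁ L₂ a i i) = log (L₁ i i) + a * (log (L₂ i i) - log (L₁ i i)) := by
  rw [cholGeodesic, if_pos rfl, Real.log_exp]

theorem lowerPos_cholGeodesic : LowerPos (cholGeodesic L₁ L₂ a) :=
  ⟨fun _ _ hij => cholGeodesic_of_gt L₁ L₂ a hij,
    fun i => by rw [cholGeodesic, if_pos rfl]; exact Real.exp_pos _⟩

theorem cholGeodesic_zero (h₁ : LowerPos L₁) : cholGeodesic L₁ L₂ 0 = L₁ :=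
  (lowerPos_cholGeodesic L₁ L₂ 0).ext_of_log_diag h₁
    (fun i j hji => by rw [cholGeodesic_of_lt L₁ L₂ 0 hji, zero_mul, add_zero])
    (fun i => by rw [log_cholGeodesic_diag, zero_mul, add_zero])

theorem cholGeodesic_one (h₂ : LowerPos L₂) : cholGeodesic L₁ L₂ 1 = L₂ :=
  (lowerPos_cholGeodesic L₁ L₂ 1).ext_of_log_diag h₂
    (fun i j hji => by rw [cholGeodesic_of_lt L₁ L₂ 1 hji]; ring)
    (fun i => by rw [log_cholGeodesic_diag]; ring)

theorem dLC_cholGeodesic (b : ℝ) :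
    dLC (cholGeodesic L₁ L₂ a) (cholGeodesic L₁ L₂ b) = |b - a| * dLC L₁ L₂ :=
  dLC_eq_abs_mul (b - a)
    (fun i j hji => by rw [cholGeodesic_of_lt _ _ _ hji, cholGeodesic_of_lt _ _ _ hji]; ring)
    (fun i => by rw [log_cholGeodesic_diag, log_cholGeodesic_diag]; ring)

end cholGeodesic

/-- For L₁, L₂ lower triangular with positive diagonal, γ(a) is lower triangular with
positive diagonal for every a ∈ [0,1], γ(0) = L₁, γ(1) = L₂, and
d(γ(a), γ(b)) = |b − a|·d(L₁, L₂): γ is the constant-speed Log-Cholesky geodesic. -/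
theorem cholGeodesic_is_geodesic {m : ℕ} (L₁ L₂ : Matrix (Fin m) (Fin m) ℝ)
    (h₁ : LowerPos L₁) (h₂ : LowerPos L₂) :
    (∀ a ∈ Set.Icc (0 : ℝ) 1, LowerPos (cholGeodesic L₁ L₂ a)) ∧
    cholGeodesic L₁ L₂ 0 = L₁ ∧
    cholGeodesic L₁ L₂ 1 = L₂ ∧
    (∀ a ∈ Set.Icc (0 : ℝ) 1, ∀ b ∈ Set.Icc (0 : ℝ) 1,
      dLC (cholGeodesic L₁ L₂ a) (cholGeodesic L₁ L₂ b) = |b - a| * dLC L₁ L₂) :=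
  ⟨fun a _ => lowerPos_cholGeodesic L₁ L₂ a, cholGeodesic_zero L₁ L₂ h₁,
    cholGeodesic_one L₁ L₂ h₂, fun a _ b _ => dLC_cholGeodesic L₁ L₂ a b⟩
end

section
/- In the space 𝓛₊ of lower triangular matrices with positive diagonal, the map Υ(M₁, M₂, M₃) := M₄ with ⌊M₄⌋ = ⌊M₃⌋ + (⌊M₂⌋ − ⌊M₁⌋) and D(M₄) = exp(log D(M₃) + log D(M₂) − log D(M₁)) satisfies the ubiquity property: for L₁ ≠ L₂ and any L₃, with L₄ := Υ(L₁, L₂, L₃), one has Υ(L₁, γ_{L₁,L₂}(a), L₃) = γ_{L₃,L₄}(a) for all a ∈ [0,1]. -/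
/-- The ubiquity map on 𝓛₊: `⌊Υ(M₁,M₂,M₃)⌋ = ⌊M₃⌋ + (⌊M₂⌋ − ⌊M₁⌋)` and
`D(Υ(M₁,M₂,M₃)) = exp(log D(M₃) + log D(M₂) − log D(M₁))`. -/
noncomputable def cholUpsilon {m : ℕ} (M₁ M₂ M₃ : Matrix (Fin m) (Fin m) ℝ) :
    Matrix (Fin m) (Fin m) ℝ := fun i j =>
  if i = j then
    Real.exp (Real.log (M₃ i i) + Real.log (M₂ i i) - Real.log (M₁ i i))
  else if j < i then M₃ i j + (M₂ i j - M₁ i j) else 0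

/-!
In log-Cholesky coordinates (strictly lower part, logarithm of the diagonal) the geodesic
`γ_{L₁,L₂}` is the affine segment from `L₁` to `L₂`, and `Υ(L₁, ·, L₃)` is the translation by
`L₃ - L₁`. A translation is an affine map, so it carries the segment from `L₁` to `L₂` onto the
segment from `L₃` to `Υ(L₁, L₂, L₃)`, with the same parametrisation.
-/

open AffineMap Real

theorem AffineMap.lineMap_sub_add {k V : Type*} [Ring k] [AddCommGroup V] [Module k V]
    (x₁ x₂ x₃ : V) (a : k) : lineMap x₁ x₂ a - x₁ + x₃ = lineMap x₃ (x₂ - x₁ + x₃) a := by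
  calc lineMap x₁ x₂ a - x₁ + x₃ = lineMap x₁ x₂ a +ᵥ (x₃ - x₁) := by rw [vadd_eq_add]; abel
    _ = lineMap (x₁ +ᵥ (x₃ - x₁)) (x₂ +ᵥ (x₃ - x₁)) a := lineMap_vadd _ _ _ _
    _ = lineMap x₃ (x₂ - x₁ + x₃) a := by
      rw [vadd_eq_add, vadd_eq_add, add_sub_cancel, sub_add_eq_add_sub, add_sub_assoc]

section Entries

variable {m : ℕ} {i j : Fin m} {a : ℝ} {L₁ L₂ L₃ : Matrix (Fin m) (Fin m) ℝ}

theorem cholGeodesic_apply_self :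
    cholGeodesic L₁ L₂ a i i = exp (lineMap (log (L₁ i i)) (log (L₂ i i)) a) := by
  rw [cholGeodesic, if_pos rfl, lineMap_apply_ring', add_comm]

theorem cholGeodesic_apply_of_lt (h : j < i) :
    cholGeodesic L₁ L₂ a i j = lineMap (L₁ i j) (L₂ i j) a := by
  rw [cholGeodesic, if_neg h.ne', if_pos h, lineMap_apply_ring', add_comm]

theorem cholGeodesic_apply_eq_zero (h : i < j) : cholGeodesic L₁ L₂ a i j = 0 := by
  rw [cholGeodesic, if_neg h.ne, if_neg h.not_gt]

theorem cholUpsilon_apply_self :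
    cholUpsilon L₁ L₂ L₃ i i = exp (log (L₂ i i) - log (L₁ i i) + log (L₃ i i)) := by
  rw [cholUpsilon, if_pos rfl]
  ring_nf

theorem cholUpsilon_apply_of_lt (h : j < i) :
    cholUpsilon L₁ L₂ L₃ i j = L₂ i j - L₁ i j + L₃ i j := by
  rw [cholUpsilon, if_neg h.ne', if_pos h, add_comm]

theorem cholUpsilon_apply_eq_zero (h : i < j) : cholUpsilon L₁ L₂ L₃ i j = 0 := by
  rw [cholUpsilon, if_neg h.ne, if_neg h.not_gt]

end Entries

theorem chol_ubiquity_general {m : ℕ} (L₁ L₂ L₃ : Matrix (Fin m) (Fin m) ℝ) :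
    ∀ a ∈ Set.Icc (0 : ℝ) 1,
      cholUpsilon L₁ (cholGeodesic L₁ L₂ a) L₃ =
        cholGeodesic L₃ (cholUpsilon L₁ L₂ L₃) a := by
  intro a _
  ext i j
  rcases lt_trichotomy j i with hji | rfl | hij
  · rw [cholUpsilon_apply_of_lt hji, cholGeodesic_apply_of_lt hji, cholGeodesic_apply_of_lt hji,
      cholUpsilon_apply_of_lt hji, lineMap_sub_add]
  · rw [cholUpsilon_apply_self, cholGeodesic_apply_self, cholGeodesic_apply_self,
      cholUpsilon_apply_self, log_exp, log_exp, lineMap_sub_add]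
  · rw [cholUpsilon_apply_eq_zero hij, cholGeodesic_apply_eq_zero hij]

/-- Ubiquity in the Log-Cholesky space: for L₁ ≠ L₂ and any L₃, with
L₄ = Υ(L₁, L₂, L₃), one has Υ(L₁, γ_{L₁,L₂}(a), L₃) = γ_{L₃,L₄}(a) for a ∈ [0,1]. -/
theorem chol_ubiquity {m : ℕ} (L₁ L₂ L₃ : Matrix (Fin m) (Fin m) ℝ)
    (h₁ : LowerPos L₁) (h₂ : LowerPos L₂) (h₃ : LowerPos L₃) (hne : L₁ ≠ L₂) :
    ∀ a ∈ Set.Icc (0 : ℝ) 1,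
      cholUpsilon L₁ (cholGeodesic L₁ L₂ a) L₃ =
        cholGeodesic L₃ (cholUpsilon L₁ L₂ L₃) a :=
  chol_ubiquity_general L₁ L₂ L₃
end

section
/- The map Υ(M₁, M₂, M₃) on 𝓛₊ defined by ⌊Υ⌋ = ⌊M₃⌋ + ⌊M₂⌋ − ⌊M₁⌋ and D(Υ) = exp(log D(M₃) + log D(M₂) − log D(M₁)) is jointly Lipschitz with respect to the Log-Cholesky metric: d(Υ(M₁,M₂,M₃), Υ(M₁',M₂',M₃')) ≤ d(M₁,M₁') + d(M₂,M₂') + d(M₃,M₃'). -/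
/-!
The Log-Cholesky metric is the Euclidean distance between the vectors of strictly lower
entries and logarithms of diagonal entries. In these coordinates `cholUpsilon` is the affine
map `(x₁, x₂, x₃) ↦ x₃ + x₂ - x₁` (since `log ∘ exp = id`), so the bound is the triangle
inequality.
-/

noncomputable def logCholCoords {m : ℕ} (A : Matrix (Fin m) (Fin m) ℝ) :
    EuclideanSpace ℝ ((Fin m × Fin m) ⊕ Fin m) :=
  WithLp.toLp 2 <| Sum.elim (fun p => if p.2 < p.1 then A p.1 p.2 else 0)
    fun i => Real.log (A i i)

theorem dLC_eq_dist_logCholCoords {m : ℕ} (A B : Matrix (Fin m) (Fin m) ℝ) :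
    dLC A B = dist (logCholCoords A) (logCholCoords B) := by
  rw [EuclideanSpace.dist_eq, dLC, Fintype.sum_sum_type, Fintype.sum_prod_type]
  congr 2
  · refine Finset.sum_congr rfl fun i _ => Finset.sum_congr rfl fun j _ => ?_
    by_cases h : j < i <;> simp [logCholCoords, h, Real.dist_eq]
  · simp [logCholCoords, Real.dist_eq]

theorem logCholCoords_cholUpsilon {m : ℕ} (M₁ M₂ M₃ : Matrix (Fin m) (Fin m) ℝ) :
    logCholCoords (cholUpsilon M₁ M₂ M₃) =
      logCholCoords M₃ + logCholCoords M₂ - logCholCoords M₁ := by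
  ext (⟨i, j⟩ | i)
  · by_cases h : j < i
    · simp only [logCholCoords, cholUpsilon, h, h.ne', ↓reduceIte, Sum.elim_inl, PiLp.sub_apply,
        PiLp.add_apply]
      ring
    · simp [logCholCoords, h]
  · simp [logCholCoords, cholUpsilon]

theorem dist_add_sub_add_sub_le {E : Type*} [SeminormedAddCommGroup E] (a b c a' b' c' : E) :
    dist (c + b - a) (c' + b' - a') ≤ dist a a' + dist b b' + dist c c' := by
  have hsub := dist_sub_sub_le (c + b) a (c' + b') a'
  have hadd := dist_add_add_le c b c' b'
  linarith

theorem cholUpsilon_lipschitz_general {m : ℕ} (M₁ M₂ M₃ M₁' M₂' M₃' : Matrix (Fin m) (Fin m) ℝ) :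
    dLC (cholUpsilon M₁ M₂ M₃) (cholUpsilon M₁' M₂' M₃') ≤
      dLC M₁ M₁' + dLC M₂ M₂' + dLC M₃ M₃' := by
  simp only [dLC_eq_dist_logCholCoords, logCholCoords_cholUpsilon]
  exact dist_add_sub_add_sub_le _ _ _ _ _ _

/-- The ubiquity map on 𝓛₊ is jointly Lipschitz (constant 1) for the Log-Cholesky
metric: d(Υ(M₁,M₂,M₃), Υ(M₁',M₂',M₃')) ≤ d(M₁,M₁') + d(M₂,M₂') + d(M₃,M₃'). -/
theorem cholUpsilon_lipschitz {m : ℕ} (M₁ M₂ M₃ M₁' M₂' M₃' : Matrix (Fin m) (Fin m) ℝ)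
    (h₁ : LowerPos M₁) (h₂ : LowerPos M₂) (h₃ : LowerPos M₃)
    (h₁' : LowerPos M₁') (h₂' : LowerPos M₂') (h₃' : LowerPos M₃') :
    dLC (cholUpsilon M₁ M₂ M₃) (cholUpsilon M₁' M₂' M₃') ≤
      dLC M₁ M₁' + dLC M₂ M₂' + dLC M₃ M₃' :=
  cholUpsilon_lipschitz_general M₁ M₂ M₃ M₁' M₂' M₃'
end

section
/- Let g₁, g₂, g₃ be unit vectors in a real inner product space with g₂ not a multiple of g₁, θ = arccos⟨g₁,g₂⟩, R the associated planar rotation with Rg₁ = g₂, and g₄ := R(g₃). Then ⟨g₃, g₄⟩ ≥ cos θ; equivalently, the intrinsic distance satisfies d(g₃, g₄) = arccos⟨g₃,g₄⟩ ≤ θ = d(g₁, g₂). -/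
/-!
With `Q x = ⟪u₂, x⟫ • u₁ - ⟪u₁, x⟫ • u₂` skew-adjoint, `⟪x, Q x⟫ = 0` and `⟪x, Q (Q x)⟫ = -‖Q x‖²`,
so `⟪x, R x⟫ = ‖x‖² - (1 - cos θ) ‖Q x‖²`. For an orthonormal pair `(u₁, u₂)`, Bessel's inequality
gives `‖Q x‖ ≤ ‖x‖`, hence `⟪x, R x⟫ ≥ cos θ` on the unit sphere, and `arccos` is antitone.
-/

open scoped RealInnerProductSpace

namespace InnerProductGeometry

variable {H : Type*} [NormedAddCommGroup H] [InnerProductSpace ℝ H]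

/-- The skew map `u₁ ⊗ u₂ - u₂ ⊗ u₁`. -/
def wedgeMap (u₁ u₂ x : H) : H := ⟪u₂, x⟫ • u₁ - ⟪u₁, x⟫ • u₂

/-- Rodrigues' formula: a rotation by `θ` of the plane of `u₁, u₂` when they are orthonormal. -/
noncomputable def planeRotation (u₁ u₂ : H) (θ : ℝ) (x : H) : H :=
  x + Real.sin θ • wedgeMap u₁ u₂ x + (1 - Real.cos θ) • wedgeMap u₁ u₂ (wedgeMap u₁ u₂ x)

theorem inner_wedgeMap_right (u₁ u₂ x y : H) :
    ⟪x, wedgeMap u₁ u₂ y⟫ = -⟪wedgeMap u₁ u₂ x, y⟫ := by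
  simp only [wedgeMap, inner_sub_left, inner_sub_right, real_inner_smul_left,
    real_inner_smul_right, real_inner_comm x]
  ring

theorem inner_self_wedgeMap (u₁ u₂ x : H) : ⟪x, wedgeMap u₁ u₂ x⟫ = 0 := by
  have := inner_wedgeMap_right u₁ u₂ x x
  rw [real_inner_comm x] at this
  linarith

theorem inner_planeRotation_self (u₁ u₂ : H) (θ : ℝ) (x : H) :
    ⟪x, planeRotation u₁ u₂ θ x⟫ = ‖x‖ ^ 2 - (1 - Real.cos θ) * ‖wedgeMap u₁ u₂ x‖ ^ 2 := by
  simp only [planeRotation, inner_add_right, real_inner_smul_right, inner_self_wedgeMap,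
    inner_wedgeMap_right u₁ u₂ x (wedgeMap u₁ u₂ x), real_inner_self_eq_norm_sq]
  ring

theorem norm_wedgeMap_sq {u₁ u₂ : H} (hu : Orthonormal ℝ ![u₁, u₂]) (x : H) :
    ‖wedgeMap u₁ u₂ x‖ ^ 2 = ⟪u₁, x⟫ ^ 2 + ⟪u₂, x⟫ ^ 2 := by
  have h₁ : ‖u₁‖ = 1 := hu.norm_eq_one 0
  have h₂ : ‖u₂‖ = 1 := hu.norm_eq_one 1
  have h₁₂ : ⟪u₁, u₂⟫ = 0 := hu.inner_eq_zero (i := 0) (j := 1) (by decide)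
  rw [wedgeMap, norm_sub_sq_real, norm_smul, norm_smul, real_inner_smul_left,
    real_inner_smul_right, h₁, h₂, h₁₂, Real.norm_eq_abs, Real.norm_eq_abs]
  simp only [mul_one, mul_zero, sub_zero, sq_abs]
  ring

theorem norm_wedgeMap_le {u₁ u₂ : H} (hu : Orthonormal ℝ ![u₁, u₂]) (x : H) :
    ‖wedgeMap u₁ u₂ x‖ ≤ ‖x‖ := by
  have hbessel := hu.sum_inner_products_le x (s := Finset.univ)
  simp only [Fin.sum_univ_two, Matrix.cons_val_zero, Matrix.cons_val_one, Real.norm_eq_abs,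
    sq_abs] at hbessel
  rw [← pow_le_pow_iff_left₀ (norm_nonneg _) (norm_nonneg _) two_ne_zero, norm_wedgeMap_sq hu]
  exact hbessel

theorem cos_mul_norm_sq_le_inner_planeRotation_self {u₁ u₂ : H} (hu : Orthonormal ℝ ![u₁, u₂])
    (θ : ℝ) (x : H) : Real.cos θ * ‖x‖ ^ 2 ≤ ⟪x, planeRotation u₁ u₂ θ x⟫ := by
  have hQ : ‖wedgeMap u₁ u₂ x‖ ^ 2 ≤ ‖x‖ ^ 2 := by
    gcongr
    exact norm_wedgeMap_le hu x
  rw [inner_planeRotation_self]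
  nlinarith [Real.cos_le_one θ]

theorem orthonormal_gramSchmidt_pair {g₁ g₂ : H} (hg₁ : ‖g₁‖ = 1) (hind : ∀ c : ℝ, g₂ ≠ c • g₁) :
    Orthonormal ℝ ![g₁, ‖g₂ - ⟪g₂, g₁⟫ • g₁‖⁻¹ • (g₂ - ⟪g₂, g₁⟫ • g₁)] := by
  have hv : g₂ - ⟪g₂, g₁⟫ • g₁ ≠ 0 := fun h => hind _ (sub_eq_zero.mp h)
  refine orthonormal_vecCons_iff.mpr ⟨hg₁, fun i => ?_, orthonormal_vecCons_iff.mpr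
    ⟨norm_smul_inv_norm hv, fun i => i.elim0, Orthonormal.of_isEmpty _⟩⟩
  fin_cases i
  simp only [Fin.zero_eta, Matrix.cons_val_zero, real_inner_smul_right, inner_sub_right,
    real_inner_self_eq_norm_sq, hg₁, real_inner_comm g₁ g₂]
  ring

end InnerProductGeometry

open InnerProductGeometry in
theorem sphere_transport_contraction_general {H : Type*} [NormedAddCommGroup H]
    [InnerProductSpace ℝ H] (g₁ g₂ g₃ : H)
    (hg₁ : ‖g₁‖ = 1) (hg₃ : ‖g₃‖ = 1)
    (hind : ∀ c : ℝ, g₂ ≠ c • g₁) :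
    let θ : ℝ := Real.arccos ⟪g₁, g₂⟫
    let u₁ : H := g₁
    let u₂ : H := ‖g₂ - ⟪g₂, u₁⟫ • u₁‖⁻¹ • (g₂ - ⟪g₂, u₁⟫ • u₁)
    let Q : H → H := fun x => ⟪u₂, x⟫ • u₁ - ⟪u₁, x⟫ • u₂
    let R : H → H := fun x => x + Real.sin θ • Q x + (1 - Real.cos θ) • Q (Q x)
    let g₄ : H := R g₃
    Real.cos θ ≤ ⟪g₃, g₄⟫ ∧ Real.arccos ⟪g₃, g₄⟫ ≤ θ := by
  intro θ u₁ u₂ Q R g₄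
  have hcontract : Real.cos θ ≤ ⟪g₃, g₄⟫ := by
    have := cos_mul_norm_sq_le_inner_planeRotation_self (orthonormal_gramSchmidt_pair hg₁ hind) θ g₃
    rwa [hg₃, one_pow, mul_one] at this
  refine ⟨hcontract, ?_⟩
  calc Real.arccos ⟪g₃, g₄⟫ ≤ Real.arccos (Real.cos θ) := Real.arccos_le_arccos hcontract
    _ = θ := Real.arccos_cos (Real.arccos_nonneg _) (Real.arccos_le_pi _)

/-- Let g₁, g₂, g₃ be unit vectors with g₂ not a multiple of g₁, θ = arccos⟨g₁,g₂⟩,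
R the associated planar rotation (so Rg₁ = g₂), and g₄ = R(g₃). Then ⟨g₃,g₄⟩ ≥ cos θ;
equivalently the intrinsic distance satisfies arccos⟨g₃,g₄⟩ ≤ θ = arccos⟨g₁,g₂⟩. -/
theorem sphere_transport_contraction {H : Type*} [NormedAddCommGroup H]
    [InnerProductSpace ℝ H] (g₁ g₂ g₃ : H)
    (hg₁ : ‖g₁‖ = 1) (hg₂ : ‖g₂‖ = 1) (hg₃ : ‖g₃‖ = 1)
    (hind : ∀ c : ℝ, g₂ ≠ c • g₁) :
    let θ : ℝ := Real.arccos ⟪g₁, g₂⟫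
    let u₁ : H := g₁
    let u₂ : H := ‖g₂ - ⟪g₂, u₁⟫ • u₁‖⁻¹ • (g₂ - ⟪g₂, u₁⟫ • u₁)
    let Q : H → H := fun x => ⟪u₂, x⟫ • u₁ - ⟪u₁, x⟫ • u₂
    let R : H → H := fun x => x + Real.sin θ • Q x + (1 - Real.cos θ) • Q (Q x)
    let g₄ : H := R g₃
    Real.cos θ ≤ ⟪g₃, g₄⟫ ∧ Real.arccos ⟪g₃, g₄⟫ ≤ θ :=
  sphere_transport_contraction_general g₁ g₂ g₃ hg₁ hg₃ hind
end
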